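/- arXiv:1403.3831 — 2 statements merged into one kernel-verified Lean document; each statement's English description precedes it below -/
import Mathlib

section
/- Let (M, ρ) be a metric space admitting a minimal spanning tree. Then the graph G_min(M, ρ) on vertex set M, whose edges are the pairs vw such that there is a partition M = M' ⊔ M'' into nonempty sets with v ∈ M', w ∈ M'' and ρ(v, w) = ρ(M', M''), is connected. -/
open scoped ENNReal

namespace MSTPaper

variable {M : Type*}

/-- The length of an edge `e` of a graph on a metric space: the extended
distance between its endpoints. -/
noncomputable def edgeLen [MetricSpace M] (e : Sym2 M) : ℝ≥0∞ :=
  Sym2.lift ⟨fun x y => edist x y, fun x y => edist_comm x y⟩ e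

/-- The length of a graph: the (possibly infinite) sum of the lengths of its edges. -/
noncomputable def graphLen [MetricSpace M] (G : SimpleGraph M) : ℝ≥0∞ :=
  ∑' e : G.edgeSet, edgeLen (e : Sym2 M)

/-- The distance between two subsets of a metric space. -/
noncomputable def setDist [MetricSpace M] (A B : Set M) : ℝ≥0∞ :=
  ⨅ x ∈ A, ⨅ y ∈ B, edist x y

/-- A minimal spanning tree on the metric space `M`: a spanning tree of finite
length whose length equals the infimum of lengths of all spanning trees on `M`. -/
def IsMST [MetricSpace M] (T : SimpleGraph M) : Prop :=
  T.IsTree ∧ graphLen T < ⊤ ∧ ∀ T' : SimpleGraph M, T'.IsTree → graphLen T ≤ graphLen T'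

/-- An edge `uv` of `G` is exact if its length equals the distance between the
two connected components obtained by removing it. -/
def ExactEdge [MetricSpace M] (G : SimpleGraph M) (u v : M) : Prop :=
  edist u v = setDist {x | (G.deleteEdges {s(u,v)}).Reachable u x}
                      {x | (G.deleteEdges {s(u,v)}).Reachable v x}


/-- The graph `G_min(M, ρ)` whose edges are pairs attaining the distance between the
parts of some partition of `M`. -/
noncomputable def Gmin (M : Type*) [MetricSpace M] : SimpleGraph M :=
  SimpleGraph.fromRel (fun v w => ∃ A B : Set M, Disjoint A B ∧ A ∪ B = Set.univ ∧
    v ∈ A ∧ w ∈ B ∧ edist v w = setDist A B)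

/-! Removing an edge `uv` from a tree `T` leaves two components, the vertices reachable from
`u` and those reachable from `v`. If some `x` in the first were closer to some `y` in the
second than `u` is to `v`, exchanging `uv` for `xy` would give a spanning tree which is
strictly shorter, since the length of `T` is finite. So every edge of a minimal spanning tree
realises the distance between the two sides of the partition it induces, i.e. it is an edge of
`G_min`, and `G_min` contains a spanning tree. -/

end MSTPaper

namespace SimpleGraph

variable {V : Type*} {G : SimpleGraph V} {u v x y : V}

theorem Reachable.deleteEdges_reachable_or (h : G.Reachable x u) :
    (G.deleteEdges {s(u, v)}).Reachable x u ∨ (G.deleteEdges {s(u, v)}).Reachable x v := by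
  obtain ⟨p⟩ := h
  induction p with
  | nil => exact .inl .rfl
  | @cons a b w hab _ ih =>
    by_cases he : s(a, b) = s(w, v)
    · rcases Sym2.eq_iff.mp he with ⟨rfl, -⟩ | ⟨rfl, -⟩
      exacts [.inl .rfl, .inr .rfl]
    · have hab' : (G.deleteEdges {s(w, v)}).Adj a b := by simp [hab, he]
      exact ih.imp hab'.reachable.trans hab'.reachable.trans

theorem Connected.union_setOf_reachable_deleteEdges (hG : G.Connected) :
    {x | (G.deleteEdges {s(u, v)}).Reachable u x} ∪
      {x | (G.deleteEdges {s(u, v)}).Reachable v x} = Set.univ :=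
  Set.eq_univ_of_forall fun x ↦ ((hG x u).deleteEdges_reachable_or).imp Reachable.symm
    Reachable.symm

theorem IsAcyclic.not_reachable_deleteEdges (hG : G.IsAcyclic) (huv : G.Adj u v)
    (hx : (G.deleteEdges {s(u, v)}).Reachable u x)
    (hy : (G.deleteEdges {s(u, v)}).Reachable v y) :
    ¬(G.deleteEdges {s(u, v)}).Reachable x y := fun hxy ↦
  isBridge_iff.mp (isAcyclic_iff_forall_adj_isBridge.mp hG huv) ((hx.trans hxy).trans hy.symm)

theorem IsAcyclic.disjoint_setOf_reachable_deleteEdges (hG : G.IsAcyclic) (huv : G.Adj u v) :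
    Disjoint {x | (G.deleteEdges {s(u, v)}).Reachable u x}
      {x | (G.deleteEdges {s(u, v)}).Reachable v x} :=
  Set.disjoint_left.mpr fun _ hu hv ↦ hG.not_reachable_deleteEdges huv hu hv .rfl

theorem sup_edge_adj_of_ne (hne : x ≠ y) : (G ⊔ edge x y).Adj x y :=
  .inr ((edge_adj x y x y).mpr ⟨.inl ⟨rfl, rfl⟩, hne⟩)

theorem IsTree.deleteEdges_sup_edge (hG : G.IsTree) (huv : G.Adj u v)
    (hx : (G.deleteEdges {s(u, v)}).Reachable u x)
    (hy : (G.deleteEdges {s(u, v)}).Reachable v y) :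
    (G.deleteEdges {s(u, v)} ⊔ edge x y).IsTree := by
  set G' := G.deleteEdges {s(u, v)}
  have hxy : ¬G'.Reachable x y := hG.isAcyclic.not_reachable_deleteEdges huv hx hy
  refine ⟨?_, (hG.isAcyclic.anti (G.deleteEdges_le _)).sup_edge_of_not_reachable hxy⟩
  have hne : x ≠ y := fun h ↦ hxy (h ▸ .rfl)
  have hle : G' ≤ G' ⊔ edge x y := le_sup_left
  have huv' : (G' ⊔ edge x y).Reachable u v :=
    ((hx.mono hle).trans (sup_edge_adj_of_ne hne).reachable).trans (hy.mono hle).symm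
  refine (connected_iff_exists_forall_reachable _).mpr ⟨u, fun z ↦ ?_⟩
  rcases (hG.connected z u).deleteEdges_reachable_or (v := v) with hz | hz
  exacts [(hz.mono hle).symm, huv'.trans (hz.mono hle).symm]

end SimpleGraph

namespace MSTPaper

open SimpleGraph

variable {M : Type*}

section

variable [MetricSpace M]

theorem graphLen_eq_edist_add_graphLen_deleteEdges {G : SimpleGraph M} {x y : M}
    (hxy : G.Adj x y) : graphLen G = edist x y + graphLen (G.deleteEdges {s(x, y)}) := by
  have hsplit : G.edgeSet = {s(x, y)} ∪ (G.edgeSet \ {s(x, y)}) :=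
    (Set.union_sdiff_cancel (Set.singleton_subset_iff.mpr (G.mem_edgeSet.mpr hxy))).symm
  have hdisj : Disjoint {s(x, y)} (G.edgeSet \ {s(x, y)}) := Set.disjoint_sdiff_right
  calc graphLen G
      = ∑' e : ↥({s(x, y)} ∪ (G.edgeSet \ {s(x, y)})), edgeLen (e : Sym2 M) :=
        tsum_congr_set_coe _ hsplit
    _ = edist x y + graphLen (G.deleteEdges {s(x, y)}) := by
        rw [ENNReal.summable.tsum_union_disjoint hdisj ENNReal.summable, tsum_singleton,
          graphLen, edgeSet_deleteEdges]
        rfl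

theorem graphLen_sup_edge {G : SimpleGraph M} {x y : M} (hne : x ≠ y) (hxy : ¬G.Adj x y) :
    graphLen (G ⊔ edge x y) = edist x y + graphLen G := by
  rw [graphLen_eq_edist_add_graphLen_deleteEdges (sup_edge_adj_of_ne hne), deleteEdges_sup,
    deleteEdges_edge (Set.mem_singleton _), sup_bot_eq,
    deleteEdges_eq_self.mpr (by simpa using hxy)]

theorem setDist_le_edist {A B : Set M} {x y : M} (hx : x ∈ A) (hy : y ∈ B) :
    setDist A B ≤ edist x y :=
  iInf₂_le_of_le x hx (iInf₂_le y hy)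

theorem IsMST.exactEdge {T : SimpleGraph M} (hT : IsMST T) {u v : M} (huv : T.Adj u v) :
    ExactEdge T u v := by
  obtain ⟨hTree, hfin, hmin⟩ := hT
  set T' := T.deleteEdges {s(u, v)}
  refine le_antisymm (le_iInf₂ fun x hx ↦ le_iInf₂ fun y hy ↦ ?_)
    (setDist_le_edist (Reachable.refl u) (Reachable.refl v))
  by_contra! hlt
  have hsep : ¬T'.Reachable x y := hTree.isAcyclic.not_reachable_deleteEdges huv hx hy
  have hlenT : graphLen T = edist u v + graphLen T' :=
    graphLen_eq_edist_add_graphLen_deleteEdges huv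
  have hT' : graphLen T' ≠ ⊤ := fun h ↦ hfin.ne (by rw [hlenT, h, add_top])
  have hshorter : graphLen (T' ⊔ edge x y) < graphLen T := by
    have hne : x ≠ y := fun h ↦ hsep (h ▸ .rfl)
    rw [graphLen_sup_edge hne fun h ↦ hsep h.reachable, hlenT]
    exact ENNReal.add_lt_add_right hT' hlt
  exact (hmin _ (hTree.deleteEdges_sup_edge huv hx hy)).not_gt hshorter

theorem ExactEdge.gmin_adj {T : SimpleGraph M} (hT : T.IsTree) {u v : M} (huv : T.Adj u v)
    (hexact : ExactEdge T u v) : (Gmin M).Adj u v :=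
  (fromRel_adj _ u v).mpr ⟨huv.ne, .inl ⟨_, _,
    hT.isAcyclic.disjoint_setOf_reachable_deleteEdges huv,
    hT.connected.union_setOf_reachable_deleteEdges, .refl u, .refl v, hexact⟩⟩

end

/-- If a minimal spanning tree exists, then `G_min(M, ρ)` is connected. -/
theorem Gmin_connected_of_mst [MetricSpace M] (h : ∃ T : SimpleGraph M, IsMST T) :
    (Gmin M).Connected := by
  obtain ⟨T, hT⟩ := h
  exact hT.1.connected.mono fun _ _ huv ↦ (hT.exactEdge huv).gmin_adj hT.1 huv

end MSTPaper
end

section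
/- Let (M, ρ) be a metric space admitting some spanning tree of finite length, and suppose that for every partition of M into nonempty subsets M₁ and M₂ the distance ρ(M₁, M₂) is attained by some pair of points. Then a minimal spanning tree on (M, ρ) exists. -/
/-
The attainment hypothesis forces `M` to be finite. Colour a spanning tree of finite length
properly with two colours. If `M` were infinite the tree would have infinitely many edges,
and as their lengths are summable some edges would be arbitrarily short; every edge joins the
two colour classes, so their distance would be `0`, and it could not be attained by two
distinct points. On a finite space a tree of least length exists among the finitely many trees.
-/

open scoped ENNReal

namespace MSTPaper

variable {M : Type*}

lemma setDist_le [MetricSpace M] {A B : Set M} {x y : M} (hx : x ∈ A) (hy : y ∈ B) :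
    setDist A B ≤ edist x y :=
  (iInf₂_le x hx).trans (iInf₂_le y hy)

lemma _root_.SimpleGraph.Connected.infinite_edgeSet [Infinite M] {G : SimpleGraph M}
    (hG : G.Connected) : G.edgeSet.Infinite := by
  classical
  intro hfin
  have hcover : (Set.univ : Set M) ⊆ ⋃ e ∈ G.edgeSet, (e.toFinset : Set M) := by
    intro v _
    obtain ⟨w, hvw⟩ := hG.preconnected.exists_adj_of_nontrivial v
    exact Set.mem_biUnion (G.mem_edgeSet.mpr hvw) (Sym2.mem_toFinset.mpr (Sym2.mem_mk_left v w))
  exact Set.infinite_univ ((hfin.biUnion fun e _ => e.toFinset.finite_toSet).subset hcover)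

lemma exists_adj_edist_lt_of_graphLen_ne_top [MetricSpace M] {G : SimpleGraph M}
    (hinf : G.edgeSet.Infinite) (hlen : graphLen G ≠ ⊤) {ε : ℝ≥0∞} (hε : ε ≠ 0) :
    ∃ u v, G.Adj u v ∧ edist u v < ε := by
  by_contra! hlong
  have : Infinite G.edgeSet := hinf.to_subtype
  refine hlen (top_le_iff.mp ?_)
  calc ⊤ = ∑' _ : G.edgeSet, ε := (ENNReal.tsum_const_eq_top_of_ne_zero hε).symm
    _ ≤ graphLen G := ENNReal.tsum_le_tsum fun ⟨e, he⟩ => by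
        induction e using Sym2.ind with
        | _ u v => exact hlong u v he

lemma finite_of_attained_distances [MetricSpace M] {G : SimpleGraph M} (hG : G.IsTree)
    (hlen : graphLen G ≠ ⊤)
    (hatt : ∀ A B : Set M, A.Nonempty → B.Nonempty → Disjoint A B → A ∪ B = Set.univ →
      ∃ a ∈ A, ∃ b ∈ B, edist a b = setDist A B) :
    Finite M := by
  by_contra hfin
  have : Infinite M := not_finite_iff_infinite.mp hfin
  have hinf := hG.connected.infinite_edgeSet
  obtain ⟨c⟩ := hG.colorable_two
  set A : Set M := {v | c v = 0}
  have hcross : ∀ ε ≠ 0, ∃ a ∈ A, ∃ b ∈ Aᶜ, edist a b < ε := by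
    intro ε hε
    obtain ⟨u, v, huv, hlt⟩ := exists_adj_edist_lt_of_graphLen_ne_top hinf hlen hε
    by_cases hu : u ∈ A
    · exact ⟨u, hu, v, fun hv => c.valid huv (hu.trans hv.symm), hlt⟩
    · have hv : v ∈ A := by
        have := c.valid huv
        simp only [A, Set.mem_ofPred_eq] at hu ⊢
        omega
      exact ⟨v, hv, u, hu, by rwa [edist_comm]⟩
  obtain ⟨a₀, ha₀, b₀, hb₀, -⟩ := hcross 1 one_ne_zero
  obtain ⟨a, ha, b, hb, hab⟩ := hatt A Aᶜ ⟨a₀, ha₀⟩ ⟨b₀, hb₀⟩ disjoint_compl_right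
    (Set.union_compl_self A)
  have hpos : setDist A Aᶜ ≠ 0 := by
    rw [← hab]
    exact (edist_pos.mpr fun h : a = b => hb (h ▸ ha)).ne'
  obtain ⟨x, hx, y, hy, hxy⟩ := hcross _ hpos
  exact (setDist_le hx hy).not_gt hxy

lemma exists_isMST_of_finite [MetricSpace M] [Finite M]
    (hgood : ∃ G : SimpleGraph M, G.IsTree ∧ graphLen G < ⊤) :
    ∃ T : SimpleGraph M, IsMST T := by
  obtain ⟨G, hG, hGlen⟩ := hgood
  obtain ⟨T, hT, hTmin⟩ := Set.exists_min_image {T : SimpleGraph M | T.IsTree} graphLen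
    (Set.toFinite _) ⟨G, hG⟩
  exact ⟨T, hT, (hTmin G hG).trans_lt hGlen, hTmin⟩

/-- If `(M, ρ)` is good (has a spanning tree of finite length) and the distance
between the parts of every partition of `M` is attained, then a minimal spanning
tree on `(M, ρ)` exists. -/
theorem mst_exists_of_attained_distances [MetricSpace M]
    (hgood : ∃ G : SimpleGraph M, G.IsTree ∧ graphLen G < ⊤)
    (hatt : ∀ A B : Set M, A.Nonempty → B.Nonempty → Disjoint A B → A ∪ B = Set.univ →
      ∃ a ∈ A, ∃ b ∈ B, edist a b = setDist A B) :
    ∃ T : SimpleGraph M, IsMST T := by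
  obtain ⟨G, hG, hGlen⟩ := hgood
  have : Finite M := finite_of_attained_distances hG hGlen.ne hatt
  exact exists_isMST_of_finite ⟨G, hG, hGlen⟩

end MSTPaper
end
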